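/- arXiv:2009.12529 — 5 statements merged into one kernel-verified Lean document; each statement's English description precedes it below -/
import Mathlib

section
/- Let M be a positive integer, h > 0, and let u and w be periodic grid functions. Then (ψ(u,w), w) = 0, i.e. h·∑_{i=1}^{M} (1/3)·(u_i·Δ_x w_i + Δ_x(u·w)_i)·w_i = 0. (Lemma 2, first identity.) -/
/-!
The summand `ψ(u,w)_i w_i` is the discrete divergence `(F_i - F_{i-1}) / (6h)` of the flux
`F_j = (u_j + u_{j+1}) w_j w_{j+1}`, so its sum over a period telescopes to zero.
-/

open Finset

namespace BBMB

/-- A periodic grid function with period `M`. -/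
def Periodic (M : ℕ) (u : ℤ → ℝ) : Prop := ∀ i : ℤ, u (i + (M : ℤ)) = u i

/-- Forward difference `δ_x u_{i+1/2} = (u_{i+1} - u_i)/h`. -/
noncomputable def dxp (h : ℝ) (u : ℤ → ℝ) (i : ℤ) : ℝ := (u (i + 1) - u i) / h

/-- Backward difference `δ_x u_{i-1/2} = (u_i - u_{i-1})/h`. -/
noncomputable def dxm (h : ℝ) (u : ℤ → ℝ) (i : ℤ) : ℝ := (u i - u (i - 1)) / h

/-- Second difference `δ_x² u_i = (u_{i+1} - 2 u_i + u_{i-1})/h²`. -/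
noncomputable def dxx (h : ℝ) (u : ℤ → ℝ) (i : ℤ) : ℝ :=
  (u (i + 1) - 2 * u i + u (i - 1)) / h ^ 2

/-- Centered difference `Δ_x u_i = (u_{i+1} - u_{i-1})/(2h)`. -/
noncomputable def Dx (h : ℝ) (u : ℤ → ℝ) (i : ℤ) : ℝ := (u (i + 1) - u (i - 1)) / (2 * h)

/-- Discrete inner product `(u, w) = h ∑_{i=1}^{M} u_i w_i`. -/
noncomputable def ip (M : ℕ) (h : ℝ) (u w : ℤ → ℝ) : ℝ :=
  h * ∑ i ∈ Finset.Icc (1 : ℤ) (M : ℤ), u i * w i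

/-- Discrete inner product `⟨δ_x u, δ_x w⟩ = h ∑_{i=1}^{M} (δ_x u_{i-1/2})(δ_x w_{i-1/2})`. -/
noncomputable def dip (M : ℕ) (h : ℝ) (u w : ℤ → ℝ) : ℝ :=
  h * ∑ i ∈ Finset.Icc (1 : ℤ) (M : ℤ), dxm h u i * dxm h w i

/-- Discrete `L²` norm `‖u‖ = √((u,u))`. -/
noncomputable def nrm (M : ℕ) (h : ℝ) (u : ℤ → ℝ) : ℝ := Real.sqrt (ip M h u u)

/-- Discrete `H¹` seminorm `|u|₁ = √(⟨δ_x u, δ_x u⟩)`. -/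
noncomputable def snorm (M : ℕ) (h : ℝ) (u : ℤ → ℝ) : ℝ := Real.sqrt (dip M h u u)

/-- Trilinear term `ψ(u,v)_i = (1/3) (u_i Δ_x v_i + Δ_x (u·v)_i)`. -/
noncomputable def psi (h : ℝ) (u v : ℤ → ℝ) (i : ℤ) : ℝ :=
  (1 / 3) * (u i * Dx h v i + Dx h (fun j => u j * v j) i)

theorem sum_Icc_sub_pred {G : Type*} [AddCommGroup G] (f : ℤ → G) (n : ℕ) :
    ∑ i ∈ Icc (1 : ℤ) n, (f i - f (i - 1)) = f n - f 0 := by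
  induction n with
  | zero => simp
  | succ n ih =>
    rw [Nat.cast_succ, ← insert_Icc_right_eq_Icc_add_one (by omega),
      sum_insert (by simp), ih, add_sub_cancel_right]
    abel

theorem Periodic.sum_Icc_sub_pred {M : ℕ} {f : ℤ → ℝ} (hf : Periodic M f) :
    ∑ i ∈ Icc (1 : ℤ) M, (f i - f (i - 1)) = 0 := by
  rw [BBMB.sum_Icc_sub_pred, ← zero_add (M : ℤ), hf, sub_self]

def flux (u w : ℤ → ℝ) (j : ℤ) : ℝ := (u j + u (j + 1)) * w j * w (j + 1)

theorem Periodic.flux {M : ℕ} {u w : ℤ → ℝ} (hu : Periodic M u) (hw : Periodic M w) :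
    Periodic M (flux u w) := by
  intro j
  rw [BBMB.flux, BBMB.flux, add_right_comm j (M : ℤ) 1, hu, hu, hw, hw]

theorem psi_mul_self_eq_flux_sub (h : ℝ) (u w : ℤ → ℝ) (i : ℤ) :
    psi h u w i * w i = (flux u w i - flux u w (i - 1)) / (6 * h) := by
  simp only [psi, Dx, flux, sub_add_cancel]
  rcases eq_or_ne h 0 with rfl | hh
  · simp
  · field_simp
    ring

theorem psi_inner_self_general (M : ℕ) (h : ℝ) (u w : ℤ → ℝ)
    (hu : Periodic M u) (hw : Periodic M w) :
    ip M h (psi h u w) w = 0 := by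
  simp only [ip, psi_mul_self_eq_flux_sub, ← sum_div, (hu.flux hw).sum_Icc_sub_pred,
    zero_div, mul_zero]

/-- Lemma 2, first identity: `(ψ(u,w), w) = 0`. -/
theorem psi_inner_self (M : ℕ) (h : ℝ) (u w : ℤ → ℝ)
    (hM : 0 < M) (hh : 0 < h) (hu : Periodic M u) (hw : Periodic M w) :
    ip M h (psi h u w) w = 0 :=
  psi_inner_self_general M h u w hu hw

end BBMB
end

section
/- Let f : ℝ → ℝ be five times continuously differentiable on [x − h, x + h] for some x ∈ ℝ and h > 0, and suppose |f^{(k)}(y)| ≤ K for all y ∈ [x − h, x + h] and 0 ≤ k ≤ 5. Then, with Δ_x F = (f(x+h) − f(x−h))/(2h) and Δ_x G = (f''(x+h) − f''(x−h))/(2h), one has |f'(x) − (Δ_x F − (h²/6)·Δ_x G)| ≤ K·h⁴. (Lemma 3, second expansion: three-point fourth-order compact approximation of the first derivative.) -/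
open Finset

namespace BBMB

/-! Taylor-expand the odd part `t ↦ g (x + t) - g (x - t)` on `[0, h]`: its even-order terms
vanish, so `f (x + h) - f (x - h) = 2h f' + h³/3 f''' + O(K h⁵)` and
`f'' (x + h) - f'' (x - h) = 2h f''' + O(K h³)`. In `ΔF - h²/6 ΔG` the `f'''` terms cancel,
leaving an error of at most `K h⁴ / 8`. -/

open Set Nat

section IteratedDerivWithin

variable {𝕜 : Type*} [NontriviallyNormedField 𝕜] {F : Type*} [NormedAddCommGroup F]
  [NormedSpace 𝕜 F] {f : 𝕜 → F} {s : Set 𝕜}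

theorem iteratedDerivWithin_iteratedDerivWithin {m k : ℕ} :
    iteratedDerivWithin k (iteratedDerivWithin m f s) s = iteratedDerivWithin (k + m) f s := by
  have hiter : ∀ j, iteratedDerivWithin j f s = (fun g : 𝕜 → F => derivWithin g s)^[j] f :=
    fun j => funext fun _ => iteratedDerivWithin_eq_iterate
  funext y
  rw [iteratedDerivWithin_eq_iterate, hiter, hiter, Function.iterate_add_apply]

theorem contDiffOn_iteratedDerivWithin (hs : UniqueDiffOn 𝕜 s) {n m i : ℕ}
    (hf : ContDiffOn 𝕜 n f s) (hmi : m + i ≤ n) :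
    ContDiffOn 𝕜 m (iteratedDerivWithin i f s) s := by
  rw [iteratedDerivWithin_eq_equiv_comp]
  exact fun y hy => (ContinuousMultilinearMap.piFieldEquiv 𝕜 (Fin i) F).symm.contDiff
    |>.comp_contDiffWithinAt ((hf y hy).iteratedFDerivWithin_right hs (mod_cast hmi) hy)

theorem iteratedDerivWithin_eq_of_subset {t : Set 𝕜} {n : ℕ} {y : 𝕜} (hst : s ⊆ t)
    (hs : UniqueDiffOn 𝕜 s) (ht : UniqueDiffOn 𝕜 t) (hf : ContDiffOn 𝕜 n f t) (hy : y ∈ s) :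
    iteratedDerivWithin n f s y = iteratedDerivWithin n f t y := by
  simp only [iteratedDerivWithin_eq_iteratedFDerivWithin,
    iteratedFDerivWithin_subset hst hs ht hf hy]

end IteratedDerivWithin

section OddPart

variable {g : ℝ → ℝ} {x h t : ℝ} {n : ℕ}

theorem mapsTo_const_add_Icc : MapsTo (x + ·) (Icc 0 h) (Icc (x - h) (x + h)) :=
  fun _ hu => ⟨by linarith [hu.1, hu.2], by linarith [hu.2]⟩

theorem mapsTo_const_sub_Icc : MapsTo (x - ·) (Icc 0 h) (Icc (x - h) (x + h)) :=
  fun _ hu => ⟨by linarith [hu.2], by linarith [hu.1, hu.2]⟩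

theorem iteratedDerivWithin_comp_add_sub_comp_sub (hh : 0 < h)
    (hg : ContDiffOn ℝ n g (Icc (x - h) (x + h))) (ht : t ∈ Icc 0 h) :
    iteratedDerivWithin n (fun u => g (x + u) - g (x - u)) (Icc 0 h) t =
      iteratedDerivWithin n g (Icc (x - h) (x + h)) (x + t) -
        (-1) ^ n * iteratedDerivWithin n g (Icc (x - h) (x + h)) (x - t) := by
  have hs : UniqueDiffOn ℝ (Icc (x - h) (x + h)) := uniqueDiffOn_Icc (by linarith)
  have hright : iteratedDerivWithin n g (Icc x (x + h)) (x + t) =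
      iteratedDerivWithin n g (Icc (x - h) (x + h)) (x + t) :=
    iteratedDerivWithin_eq_of_subset (Icc_subset_Icc (by linarith) le_rfl)
      (uniqueDiffOn_Icc (by linarith)) hs hg ⟨by linarith [ht.1], by linarith [ht.2]⟩
  have hleft : iteratedDerivWithin n g (Icc (x - h) x) (x - t) =
      iteratedDerivWithin n g (Icc (x - h) (x + h)) (x - t) :=
    iteratedDerivWithin_eq_of_subset (Icc_subset_Icc le_rfl (by linarith))
      (uniqueDiffOn_Icc (by linarith)) hs hg ⟨by linarith [ht.2], by linarith [ht.1]⟩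
  calc iteratedDerivWithin n (fun u => g (x + u) - g (x - u)) (Icc 0 h) t
      = iteratedDerivWithin n (fun u => g (x + u)) (Icc 0 h) t -
          iteratedDerivWithin n (fun u => g (x - u)) (Icc 0 h) t :=
        iteratedDerivWithin_sub ht (uniqueDiffOn_Icc hh)
          (hg.comp (by fun_prop) mapsTo_const_add_Icc t ht)
          (hg.comp (by fun_prop) mapsTo_const_sub_Icc t ht)
    _ = _ := by
        rw [iteratedDerivWithin_comp_const_add, iteratedDerivWithin_comp_const_sub]
        simp only [neg_Icc, neg_zero, vadd_Icc, add_zero, ← sub_eq_add_neg, smul_eq_mul,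
          hright, hleft]

theorem abs_sub_sub_taylor_odd_le (hh : 0 < h) {C : ℝ}
    (hg : ContDiffOn ℝ (n + 1) g (Icc (x - h) (x + h)))
    (hC : ∀ y ∈ Icc (x - h) (x + h), |iteratedDerivWithin (n + 1) g (Icc (x - h) (x + h)) y| ≤ C) :
    |g (x + h) - g (x - h) - ∑ k ∈ range (n + 1),
        (1 - (-1) ^ k) * h ^ k / k ! * iteratedDerivWithin k g (Icc (x - h) (x + h)) x|
      ≤ 2 * C * h ^ (n + 1) / n ! := by
  have hodd : ContDiffOn ℝ (n + 1) (fun u => g (x + u) - g (x - u)) (Icc 0 h) :=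
    (hg.comp (by fun_prop) mapsTo_const_add_Icc).sub (hg.comp (by fun_prop) mapsTo_const_sub_Icc)
  have hbound : ∀ t ∈ Icc 0 h,
      ‖iteratedDerivWithin (n + 1) (fun u => g (x + u) - g (x - u)) (Icc 0 h) t‖ ≤ 2 * C := by
    intro t ht
    rw [Real.norm_eq_abs, iteratedDerivWithin_comp_add_sub_comp_sub hh (mod_cast hg) ht,
      abs_sub_comm]
    calc _ ≤ |(-1) ^ (n + 1) * iteratedDerivWithin (n + 1) g (Icc (x - h) (x + h)) (x - t)| +
          |iteratedDerivWithin (n + 1) g (Icc (x - h) (x + h)) (x + t)| := abs_sub _ _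
      _ ≤ C + C := by
        rw [abs_mul, abs_pow, abs_neg, abs_one, one_pow, one_mul]
        exact add_le_add (hC _ (mapsTo_const_sub_Icc ht)) (hC _ (mapsTo_const_add_Icc ht))
      _ = 2 * C := by ring
  have hsum : ∑ k ∈ range (n + 1), ((k ! : ℝ)⁻¹ * h ^ k) •
        iteratedDerivWithin k (fun u => g (x + u) - g (x - u)) (Icc 0 h) 0 =
      ∑ k ∈ range (n + 1),
        (1 - (-1) ^ k) * h ^ k / k ! * iteratedDerivWithin k g (Icc (x - h) (x + h)) x := by
    refine sum_congr rfl fun k hk => ?_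
    rw [iteratedDerivWithin_comp_add_sub_comp_sub hh
      (hg.of_le (mod_cast (mem_range.mp hk).le)) (left_mem_Icc.mpr hh.le)]
    simp only [add_zero, sub_zero, smul_eq_mul]
    ring
  have htaylor := taylor_mean_remainder_bound hh.le hodd (right_mem_Icc.mpr hh.le) hbound
  rw [taylor_within_apply, Real.norm_eq_abs, sub_zero, hsum] at htaylor
  exact htaylor

end OddPart

theorem abs_compact_error_le {K h a b d₁ d₃ : ℝ} (hh : 0 < h) (hK : 0 ≤ K)
    (ha : |a - (2 * h * d₁ + h ^ 3 / 3 * d₃)| ≤ K * h ^ 5 / 12)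
    (hb : |b - 2 * h * d₃| ≤ K * h ^ 3) :
    |d₁ - (a / (2 * h) - h ^ 2 / 6 * (b / (2 * h)))| ≤ K * h ^ 4 := by
  have hexpr : d₁ - (a / (2 * h) - h ^ 2 / 6 * (b / (2 * h))) =
      (h ^ 2 / 6 * (b - 2 * h * d₃) - (a - (2 * h * d₁ + h ^ 3 / 3 * d₃))) / (2 * h) := by
    field_simp
    ring
  rw [hexpr, abs_div, abs_of_pos (by positivity : (0 : ℝ) < 2 * h), div_le_iff₀ (by positivity)]
  calc _ ≤ |h ^ 2 / 6 * (b - 2 * h * d₃)| + |a - (2 * h * d₁ + h ^ 3 / 3 * d₃)| := abs_sub _ _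
    _ ≤ h ^ 2 / 6 * (K * h ^ 3) + K * h ^ 5 / 12 := by
      rw [abs_mul, abs_of_nonneg (by positivity)]
      gcongr
    _ ≤ K * h ^ 4 * (2 * h) := by nlinarith [mul_nonneg hK (pow_nonneg hh.le 5)]

/-- Lemma 3, second expansion: three-point fourth-order compact approximation of `f'`. -/
theorem compact_first_derivative (f : ℝ → ℝ) (x h K : ℝ) (hh : 0 < h)
    (hf : ContDiffOn ℝ 5 f (Set.Icc (x - h) (x + h)))
    (hK : ∀ y ∈ Set.Icc (x - h) (x + h), ∀ k : ℕ, k ≤ 5 →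
      |iteratedDerivWithin k f (Set.Icc (x - h) (x + h)) y| ≤ K) :
    |iteratedDerivWithin 1 f (Set.Icc (x - h) (x + h)) x -
        ((f (x + h) - f (x - h)) / (2 * h) -
          h ^ 2 / 6 *
            ((iteratedDerivWithin 2 f (Set.Icc (x - h) (x + h)) (x + h) -
                iteratedDerivWithin 2 f (Set.Icc (x - h) (x + h)) (x - h)) /
              (2 * h)))| ≤ K * h ^ 4 := by
  have hK0 : 0 ≤ K := (abs_nonneg _).trans (hK x ⟨by linarith, by linarith⟩ 0 (by norm_num))
  have hf₂ : ContDiffOn ℝ (2 + 1) (iteratedDerivWithin 2 f (Icc (x - h) (x + h)))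
      (Icc (x - h) (x + h)) :=
    contDiffOn_iteratedDerivWithin (uniqueDiffOn_Icc (by linarith)) hf (by norm_num)
  have hexp₁ := abs_sub_sub_taylor_odd_le (n := 4) hh hf fun y hy => hK y hy 5 le_rfl
  have hexp₂ := abs_sub_sub_taylor_odd_le (n := 2) hh hf₂ fun y hy => by
    rw [iteratedDerivWithin_iteratedDerivWithin]
    exact hK y hy 5 le_rfl
  refine abs_compact_error_le hh hK0 (d₃ := iteratedDerivWithin 3 f (Icc (x - h) (x + h)) x)
    (le_of_eq_of_le ?_ (hexp₁.trans_eq ?_)) (le_of_eq_of_le ?_ (hexp₂.trans_eq ?_))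
  · congr 1
    simp only [sum_range_succ, sum_range_zero, factorial, cast_succ]
    ring
  · simp only [factorial, cast_succ]
    ring
  · congr 1
    simp only [sum_range_succ, sum_range_zero, factorial, cast_succ,
      iteratedDerivWithin_iteratedDerivWithin]
    ring
  · simp only [factorial, cast_succ]
    ring

end BBMB
end

section
/- Let f : ℝ → ℝ be six times continuously differentiable on [x − h, x + h] for some x ∈ ℝ and h > 0, and suppose |f^{(k)}(y)| ≤ K for all y ∈ [x − h, x + h] and 0 ≤ k ≤ 6. Then, with δ_x² F = (f(x+h) − 2f(x) + f(x−h))/h² and δ_x² G = (f''(x+h) − 2f''(x) + f''(x−h))/h², one has |f''(x) − (δ_x² F − (h²/12)·δ_x² G)| ≤ K·h⁴. (Lemma 3, third expansion: three-point fourth-order compact approximation of the second derivative; the C⁶ regularity is the hypothesis needed for the O(h⁴) bound.) -/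
open Finset

namespace BBMB

/-!
Expand `f` to order five and `f''` to order three around the left endpoint `x - h`, and evaluate
the expansions at `x` and `x + h`. In `δ_x² F − (h²/12) δ_x² G − f''(x)` every Taylor coefficient
cancels, so only the Lagrange remainders survive: those of `f` are `O(h⁶)` and get divided by `h²`,
those of `f''` are `O(h⁴)`; with the bounds `|f⁽⁶⁾| ≤ K` the constants add up to less than one.
-/

open Set Nat

theorem iteratedDerivWithin_iteratedDerivWithin_s6 {𝕜 F : Type*} [NontriviallyNormedField 𝕜]
    [NormedAddCommGroup F] [NormedSpace 𝕜 F] {f : 𝕜 → F} {s : Set 𝕜} (k m : ℕ) {y : 𝕜}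
    (hy : y ∈ s) :
    iteratedDerivWithin k (iteratedDerivWithin m f s) s y = iteratedDerivWithin (k + m) f s y := by
  induction k generalizing y with
  | zero => simp
  | succ k ih =>
    rw [Nat.add_right_comm, iteratedDerivWithin_succ, iteratedDerivWithin_succ]
    exact derivWithin_congr (fun z hz => ih hz) (ih hy)

theorem ContDiffOn.iteratedDerivWithin_of_add {𝕜 F : Type*} [NontriviallyNormedField 𝕜]
    [NormedAddCommGroup F] [NormedSpace 𝕜 F] {f : 𝕜 → F} {s : Set 𝕜} {n m : ℕ}
    (hf : ContDiffOn 𝕜 (n + m : ℕ) f s) (hs : UniqueDiffOn 𝕜 s) :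
    ContDiffOn 𝕜 n (iteratedDerivWithin m f s) s := by
  induction m generalizing n with
  | zero => simpa using hf
  | succ m ih =>
    rw [iteratedDerivWithin_succ]
    exact (ih (n := n + 1) (by rwa [Nat.add_right_comm, Nat.add_assoc])).derivWithin hs
      (by norm_cast)

theorem abs_sub_taylor_sum_le {f : ℝ → ℝ} {a b C y : ℝ} (n : ℕ) (hab : a ≤ b)
    (hf : ContDiffOn ℝ (n + 1) f (Icc a b)) (hy : y ∈ Icc a b)
    (hC : ∀ z ∈ Icc a b, |iteratedDerivWithin (n + 1) f (Icc a b) z| ≤ C) :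
    |f y - ∑ k ∈ Finset.range (n + 1), iteratedDerivWithin k f (Icc a b) a * (y - a) ^ k / k !| ≤
      C * (y - a) ^ (n + 1) / n ! := by
  have hT := taylor_mean_remainder_bound hab hf hy hC
  rw [taylor_within_apply, Real.norm_eq_abs] at hT
  convert hT using 4 with k
  rw [smul_eq_mul]
  ring

theorem abs_compact_scheme_remainder_le {K h r₁ r₂ s₁ s₂ : ℝ} (hh : 0 < h)
    (hr₁ : |r₁| ≤ K * h ^ 6 / 5 !) (hr₂ : |r₂| ≤ K * (2 * h) ^ 6 / 5 !)
    (hs₁ : |s₁| ≤ K * h ^ 4 / 3 !) (hs₂ : |s₂| ≤ K * (2 * h) ^ 4 / 3 !) :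
    |s₁ + (2 * r₁ - r₂) / h ^ 2 + (s₂ - 2 * s₁) / 12| ≤ K * h ^ 4 := by
  have hh2 : 0 < h ^ 2 := by positivity
  have hr : |2 * r₁ - r₂| ≤ 66 / 120 * K * h ^ 4 * h ^ 2 := by
    norm_num [factorial] at hr₁ hr₂
    calc |2 * r₁ - r₂| ≤ 2 * |r₁| + |r₂| := by
          simpa [abs_mul] using abs_sub (2 * r₁) r₂
      _ ≤ 66 / 120 * K * h ^ 4 * h ^ 2 := by nlinarith
  have hs : |s₁ + (s₂ - 2 * s₁) / 12| ≤ 26 / 72 * K * h ^ 4 := by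
    norm_num [factorial] at hs₁ hs₂
    calc |s₁ + (s₂ - 2 * s₁) / 12| = |10 * s₁ + s₂| / 12 := by
          rw [← abs_of_pos (show (0 : ℝ) < 12 by norm_num), ← abs_div]; ring_nf
      _ ≤ (10 * |s₁| + |s₂|) / 12 := by
          gcongr; simpa [abs_mul] using abs_add_le (10 * s₁) s₂
      _ ≤ 26 / 72 * K * h ^ 4 := by linarith
  have hKh : 0 ≤ K * h ^ 4 := by
    norm_num [factorial] at hs₁; linarith [abs_nonneg s₁]
  have hr' : |(2 * r₁ - r₂) / h ^ 2| ≤ 66 / 120 * K * h ^ 4 := by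
    rw [abs_div, abs_of_pos hh2, div_le_iff₀ hh2]; exact hr
  calc |s₁ + (2 * r₁ - r₂) / h ^ 2 + (s₂ - 2 * s₁) / 12|
      = |(s₁ + (s₂ - 2 * s₁) / 12) + (2 * r₁ - r₂) / h ^ 2| := by ring_nf
    _ ≤ 26 / 72 * K * h ^ 4 + 66 / 120 * K * h ^ 4 := (abs_add_le _ _).trans (add_le_add hs hr')
    _ ≤ K * h ^ 4 := by linarith

theorem abs_compact_scheme_error_le {D : ℕ → ℝ} {K h f₁ f₂ g₁ g₂ : ℝ} (hh : 0 < h)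
    (hf₁ : |f₁ - ∑ k ∈ Finset.range 6, D k * h ^ k / k !| ≤ K * h ^ 6 / 5 !)
    (hf₂ : |f₂ - ∑ k ∈ Finset.range 6, D k * (2 * h) ^ k / k !| ≤ K * (2 * h) ^ 6 / 5 !)
    (hg₁ : |g₁ - ∑ k ∈ Finset.range 4, D (k + 2) * h ^ k / k !| ≤ K * h ^ 4 / 3 !)
    (hg₂ : |g₂ - ∑ k ∈ Finset.range 4, D (k + 2) * (2 * h) ^ k / k !| ≤ K * (2 * h) ^ 4 / 3 !) :
    |g₁ - ((f₂ - 2 * f₁ + D 0) / h ^ 2 - h ^ 2 / 12 * ((g₂ - 2 * g₁ + D 2) / h ^ 2))| ≤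
      K * h ^ 4 := by
  refine le_of_eq_of_le (congrArg abs ?_) (abs_compact_scheme_remainder_le hh hf₁ hf₂ hg₁ hg₂)
  simp only [Finset.sum_range_succ, Finset.sum_range_zero]
  norm_num [factorial]
  field_simp
  ring

/-- Lemma 3, third expansion: three-point fourth-order compact approximation of `f''`. -/
theorem compact_second_derivative (f : ℝ → ℝ) (x h K : ℝ) (hh : 0 < h)
    (hf : ContDiffOn ℝ 6 f (Set.Icc (x - h) (x + h)))
    (hK : ∀ y ∈ Set.Icc (x - h) (x + h), ∀ k : ℕ, k ≤ 6 →
      |iteratedDerivWithin k f (Set.Icc (x - h) (x + h)) y| ≤ K) :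
    |iteratedDerivWithin 2 f (Set.Icc (x - h) (x + h)) x -
        ((f (x + h) - 2 * f x + f (x - h)) / h ^ 2 -
          h ^ 2 / 12 *
            ((iteratedDerivWithin 2 f (Set.Icc (x - h) (x + h)) (x + h) -
                2 * iteratedDerivWithin 2 f (Set.Icc (x - h) (x + h)) x +
                iteratedDerivWithin 2 f (Set.Icc (x - h) (x + h)) (x - h)) /
              h ^ 2))| ≤ K * h ^ 4 := by
  have hab : x - h ≤ x + h := by linarith
  have hl : x - h ∈ Icc (x - h) (x + h) := left_mem_Icc.2 hab
  have hm : x ∈ Icc (x - h) (x + h) := ⟨by linarith, by linarith⟩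
  have hr : x + h ∈ Icc (x - h) (x + h) := right_mem_Icc.2 hab
  have h2 : x + h - (x - h) = 2 * h := by ring
  have hg : ContDiffOn ℝ (3 + 1 : ℕ) (iteratedDerivWithin 2 f (Icc (x - h) (x + h)))
      (Icc (x - h) (x + h)) :=
    ContDiffOn.iteratedDerivWithin_of_add hf (uniqueDiffOn_Icc (by linarith))
  have hKf : ∀ z ∈ Icc (x - h) (x + h),
      |iteratedDerivWithin (5 + 1) f (Icc (x - h) (x + h)) z| ≤ K :=
    fun z hz => hK z hz 6 le_rfl
  have hKg : ∀ z ∈ Icc (x - h) (x + h), |iteratedDerivWithin (3 + 1)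
      (iteratedDerivWithin 2 f (Icc (x - h) (x + h))) (Icc (x - h) (x + h)) z| ≤ K :=
    fun z hz => by rw [iteratedDerivWithin_iteratedDerivWithin_s6 _ _ hz]; exact hK z hz 6 le_rfl
  have hf₁ := abs_sub_taylor_sum_le 5 hab hf hm hKf
  have hf₂ := abs_sub_taylor_sum_le 5 hab hf hr hKf
  have hg₁ := abs_sub_taylor_sum_le 3 hab hg hm hKg
  have hg₂ := abs_sub_taylor_sum_le 3 hab hg hr hKg
  simp only [iteratedDerivWithin_iteratedDerivWithin_s6 _ 2 hl, sub_sub_cancel, h2] at hf₁ hf₂ hg₁ hg₂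
  simpa using abs_compact_scheme_error_le hh hf₁ hf₂ hg₁ hg₂

end BBMB
end

section
/- Let M be a positive integer, h > 0, and let u, v, S be periodic grid functions satisfying the reduction relation v_i = δ_x² u_i − (h²/12)·δ_x² v_i + S_i for all i. Then (v, u) = −|u|₁² − (h²/12)·‖v‖² + (h⁴/144)·|v|₁² + (h²/12)·(v, S) + (S, u). (Lemma 4, identity (lem4-1).) -/
/-!
Pairing the reduction relation with `u` and summing by parts (periodicity removes the boundary
terms) gives `(v, u) = -|u|₁² + (h²/12)⟨δ_x v, δ_x u⟩ + (S, u)`; pairing it with `v` instead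
expresses the mixed term `⟨δ_x u, δ_x v⟩` as `-‖v‖² + (h²/12)|v|₁² + (v, S)`.
-/

open Finset

namespace BBMB

theorem _root_.Function.Periodic.sum_Ioc_eq_sum_Ico {α β : Type*} [Add α] [PartialOrder α]
    [LocallyFiniteOrder α] [AddCancelCommMonoid β] {f : α → β} {a c : α}
    (hf : Function.Periodic f c) (hac : a ≤ a + c) :
    ∑ i ∈ Ioc a (a + c), f i = ∑ i ∈ Ico a (a + c), f i := by
  apply add_left_cancel (a := f a)
  calc f a + ∑ i ∈ Ioc a (a + c), f i
      = ∑ i ∈ Icc a (a + c), f i := by rw [Icc_eq_cons_Ioc hac, sum_cons]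
    _ = f (a + c) + ∑ i ∈ Ico a (a + c), f i := by rw [Icc_eq_cons_Ico hac, sum_cons]
    _ = f a + ∑ i ∈ Ico a (a + c), f i := by rw [hf a]

theorem sum_Icc_comp_add_one {β : Type*} [AddCancelCommMonoid β] {M : ℕ} {f : ℤ → β}
    (hf : Function.Periodic f M) :
    ∑ i ∈ Icc (1 : ℤ) M, f (i + 1) = ∑ i ∈ Icc (1 : ℤ) M, f i := by
  have hshift : ∑ i ∈ Icc (1 : ℤ) M, f (i + 1) = ∑ i ∈ Icc (1 + 1 : ℤ) (M + 1), f i := by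
    rw [← map_add_right_Icc, sum_map]
    rfl
  rw [hshift, Icc_add_one_left_eq_Ioc, ← Ico_add_one_right_eq_Icc, add_comm (M : ℤ),
    hf.sum_Ioc_eq_sum_Ico (by omega)]

theorem sum_Icc_sub_mul_eq_neg_sum_mul_sub {R : Type*} [CommRing R] {M : ℕ} {D w : ℤ → R}
    (hD : Function.Periodic D M) (hw : Function.Periodic w M) :
    ∑ i ∈ Icc (1 : ℤ) M, (D (i + 1) - D i) * w i =
      -∑ i ∈ Icc (1 : ℤ) M, D i * (w i - w (i - 1)) := by
  have hshift := sum_Icc_comp_add_one (hD.mul (hw.sub_const 1))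
  simp only [Pi.mul_apply, add_sub_cancel_right] at hshift
  simp only [sub_mul, mul_sub, sum_sub_distrib, hshift]
  ring

theorem dxx_eq_dxm_sub_div (h : ℝ) (u : ℤ → ℝ) (i : ℤ) :
    dxx h u i = (dxm h u (i + 1) - dxm h u i) / h := by
  simp only [dxx, dxm, add_sub_cancel_right]
  ring

theorem ip_dxx {M : ℕ} {h : ℝ} {u w : ℤ → ℝ} (hu : Periodic M u) (hw : Periodic M w) :
    ip M h (dxx h u) w = -dip M h u w := by
  have hD : Function.Periodic (dxm h u) M := fun i => by
    simp only [dxm, hu i, show i + (M : ℤ) - 1 = i - 1 + M by ring, hu (i - 1)]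
  calc ip M h (dxx h u) w
      = h * (∑ i ∈ Icc (1 : ℤ) M, (dxm h u (i + 1) - dxm h u i) * w i) / h := by
        simp only [ip, dxx_eq_dxm_sub_div, div_mul_eq_mul_div, ← sum_div, mul_div_assoc']
    _ = -(h * ∑ i ∈ Icc (1 : ℤ) M, dxm h u i * ((w i - w (i - 1)) / h)) := by
        rw [sum_Icc_sub_mul_eq_neg_sum_mul_sub hD hw]
        simp only [mul_div_assoc', ← sum_div]
        ring
    _ = -dip M h u w := rfl

theorem dip_comm (M : ℕ) (h : ℝ) (u w : ℤ → ℝ) : dip M h u w = dip M h w u := by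
  simp only [dip, mul_comm (dxm h u _)]

theorem ip_comm (M : ℕ) (h : ℝ) (u w : ℤ → ℝ) : ip M h u w = ip M h w u := by
  simp only [ip, mul_comm (u _)]

theorem sq_nrm {M : ℕ} {h : ℝ} (hh : 0 ≤ h) (u : ℤ → ℝ) : nrm M h u ^ 2 = ip M h u u :=
  Real.sq_sqrt (mul_nonneg hh (sum_nonneg fun _ _ => mul_self_nonneg _))

theorem sq_snorm {M : ℕ} {h : ℝ} (hh : 0 ≤ h) (u : ℤ → ℝ) : snorm M h u ^ 2 = dip M h u u :=
  Real.sq_sqrt (mul_nonneg hh (sum_nonneg fun _ _ => mul_self_nonneg _))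

theorem ip_eq_of_reduction {M : ℕ} {h : ℝ} {u v S w : ℤ → ℝ}
    (hu : Periodic M u) (hv : Periodic M v) (hw : Periodic M w)
    (hrel : ∀ i : ℤ, v i = dxx h u i - h ^ 2 / 12 * dxx h v i + S i) :
    ip M h v w = -dip M h u w + h ^ 2 / 12 * dip M h v w + ip M h S w := by
  have hsplit :
      ip M h v w = ip M h (dxx h u) w - h ^ 2 / 12 * ip M h (dxx h v) w + ip M h S w := by
    have hpoint : ∀ i, v i * w i = dxx h u i * w i - h ^ 2 / 12 * (dxx h v i * w i) + S i * w i :=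
      fun i => by rw [hrel i]; ring
    simp only [ip, hpoint, sum_add_distrib, sum_sub_distrib, ← mul_sum]
    ring
  rw [hsplit, ip_dxx hu hw, ip_dxx hv hw]
  ring

theorem reduction_inner_identity_general (M : ℕ) (h : ℝ) (u v S : ℤ → ℝ)
    (hh : 0 < h)
    (hu : Periodic M u) (hv : Periodic M v)
    (hrel : ∀ i : ℤ, v i = dxx h u i - h ^ 2 / 12 * dxx h v i + S i) :
    ip M h v u =
      -(snorm M h u) ^ 2 - h ^ 2 / 12 * (nrm M h v) ^ 2 + h ^ 4 / 144 * (snorm M h v) ^ 2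
        + h ^ 2 / 12 * ip M h v S + ip M h S u := by
  have pair_u := ip_eq_of_reduction hu hv hu hrel
  have pair_v := ip_eq_of_reduction hu hv hv hrel
  rw [sq_snorm hh.le, sq_snorm hh.le, sq_nrm hh.le, pair_u, dip_comm M h v u, ip_comm M h v S]
  linear_combination (h ^ 2 / 12) * pair_v

/-- Lemma 4, identity (lem4-1). -/
theorem reduction_inner_identity (M : ℕ) (h : ℝ) (u v S : ℤ → ℝ)
    (hM : 0 < M) (hh : 0 < h)
    (hu : Periodic M u) (hv : Periodic M v) (hS : Periodic M S)
    (hrel : ∀ i : ℤ, v i = dxx h u i - h ^ 2 / 12 * dxx h v i + S i) :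
    ip M h v u =
      -(snorm M h u) ^ 2 - h ^ 2 / 12 * (nrm M h v) ^ 2 + h ^ 4 / 144 * (snorm M h v) ^ 2
        + h ^ 2 / 12 * ip M h v S + ip M h S u :=
  reduction_inner_identity_general M h u v S hh hu hv hrel

end BBMB
end

section
/- Let M be a positive integer, h > 0, and let e, f, R be periodic grid functions satisfying the perturbed reduction relation f_i = δ_x² e_i − (h²/12)·δ_x² f_i + R_i for all i. Then ‖f‖² ≤ (18/h²)·|e|₁² + (9/2)·‖R‖². In particular, if R = 0 then ‖f‖² ≤ (9/h²)·|e|₁². (Estimate (fk) in the proof of Theorem 6.1 and estimate (xi) in the proof of the stability theorem.) -/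
/-!
Pairing the relation with `f` and summing by parts (periodicity kills the boundary terms) gives
`‖f‖² = -⟨δₓe, δₓf⟩ + (h²/12)|f|₁² + (R, f)`. The inverse inequality `|f|₁ ≤ (2/h)‖f‖` bounds the
middle term by `‖f‖²/3` and, with Cauchy–Schwarz, the other two by `(2/h)|e|₁‖f‖` and `‖R‖‖f‖`.
Hence `‖f‖ ≤ (3/h)|e|₁ + (3/2)‖R‖`, and squaring with `(a + b)² ≤ 2a² + 2b²` gives both estimates.
-/

open Finset

namespace BBMB

theorem sum_Icc_sub_telescope {G : Type*} [AddCommGroup G] (g : ℤ → G) (M : ℕ) :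
    ∑ i ∈ Icc 1 (M : ℤ), (g (i + 1) - g i) = g (M + 1) - g 1 := by
  induction M with
  | zero => simp
  | succ M ih =>
    rw [Nat.cast_succ, ← insert_Icc_right_eq_Icc_add_one (by omega), sum_insert (by simp), ih]
    abel

theorem sum_Icc_comp_add_one_of_periodic {G : Type*} [AddCommGroup G] {g : ℤ → G} {M : ℕ}
    (hg : Function.Periodic g M) :
    ∑ i ∈ Icc 1 (M : ℤ), g (i + 1) = ∑ i ∈ Icc 1 (M : ℤ), g i := by
  rw [← sub_eq_zero, ← sum_sub_distrib, sum_Icc_sub_telescope, add_comm, hg, sub_self]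

section GridFunctions

variable {M : ℕ} {h : ℝ} {u w : ℤ → ℝ}

theorem Periodic.toFunction (hu : Periodic M u) : Function.Periodic u M := hu

theorem Periodic.dxm (hu : Periodic M u) : Periodic M (dxm h u) := fun i => by
  rw [BBMB.dxm, BBMB.dxm, add_sub_right_comm, hu, hu]

theorem ip_self_nonneg (hh : 0 ≤ h) : 0 ≤ ip M h u u :=
  mul_nonneg hh (sum_nonneg fun i _ => mul_self_nonneg (u i))

theorem nrm_sq (hh : 0 ≤ h) : nrm M h u ^ 2 = ip M h u u :=
  Real.sq_sqrt (ip_self_nonneg hh)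

theorem abs_ip_le_nrm_mul_nrm (hh : 0 ≤ h) : |ip M h u w| ≤ nrm M h u * nrm M h w := by
  have cauchy_schwarz : |∑ i ∈ Icc 1 (M : ℤ), u i * w i|
      ≤ √(∑ i ∈ Icc 1 (M : ℤ), u i * u i) * √(∑ i ∈ Icc 1 (M : ℤ), w i * w i) := by
    calc |∑ i ∈ Icc 1 (M : ℤ), u i * w i| ≤ ∑ i ∈ Icc 1 (M : ℤ), |u i| * |w i| := by
          simpa only [abs_mul] using abs_sum_le_sum_abs (fun i => u i * w i) (Icc 1 (M : ℤ))
      _ ≤ √(∑ i ∈ Icc 1 (M : ℤ), |u i| ^ 2) * √(∑ i ∈ Icc 1 (M : ℤ), |w i| ^ 2) :=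
          Real.sum_mul_le_sqrt_mul_sqrt _ _ _
      _ = _ := by simp only [sq, abs_mul_abs_self]
  calc |ip M h u w| = h * |∑ i ∈ Icc 1 (M : ℤ), u i * w i| := by
        rw [ip, abs_mul, abs_of_nonneg hh]
    _ ≤ h * (√(∑ i ∈ Icc 1 (M : ℤ), u i * u i) * √(∑ i ∈ Icc 1 (M : ℤ), w i * w i)) := by
        gcongr
    _ = nrm M h u * nrm M h w := by
        rw [nrm, nrm, ip, ip, Real.sqrt_mul hh, Real.sqrt_mul hh, mul_mul_mul_comm,
          Real.mul_self_sqrt hh]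

theorem abs_dip_le_snorm_mul_snorm (hh : 0 ≤ h) : |dip M h u w| ≤ snorm M h u * snorm M h w :=
  abs_ip_le_nrm_mul_nrm hh

theorem ip_dxx_eq_neg_dip (hu : Periodic M u) (hw : Periodic M w) (hh : h ≠ 0) :
    ip M h (dxx h u) w = -dip M h u w := by
  have dxx_eq : ∀ i, dxx h u i = (dxm h u (i + 1) - dxm h u i) / h := fun i => by
    simp only [dxx, dxm, add_sub_cancel_right, ← sub_div, div_div, ← sq]
    ring_nf
  have shift : ∑ i ∈ Icc 1 (M : ℤ), dxm h u (i + 1) * w i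
      = ∑ i ∈ Icc 1 (M : ℤ), dxm h u i * w (i - 1) := by
    simpa only [Pi.mul_apply, add_sub_cancel_right] using
      sum_Icc_comp_add_one_of_periodic ((hu.dxm (h := h)).toFunction.mul (hw.toFunction.sub_const 1))
  calc ip M h (dxx h u) w
      = ∑ i ∈ Icc 1 (M : ℤ), dxm h u (i + 1) * w i - ∑ i ∈ Icc 1 (M : ℤ), dxm h u i * w i := by
        simp only [ip, dxx_eq, ← sum_sub_distrib, mul_sum]
        exact sum_congr rfl fun i _ => by field_simp
    _ = -dip M h u w := by
        simp only [shift, dip, ← sum_sub_distrib, mul_sum, ← sum_neg_distrib]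
        exact sum_congr rfl fun i _ => by simp only [dxm]; field_simp; ring

theorem dip_self_le (hu : Periodic M u) (hh : 0 ≤ h) : dip M h u u ≤ 4 / h ^ 2 * ip M h u u := by
  have shift : ∑ i ∈ Icc 1 (M : ℤ), u (i - 1) * u (i - 1) = ∑ i ∈ Icc 1 (M : ℤ), u i * u i := by
    simpa only [Pi.mul_apply, add_sub_cancel_right] using
      (sum_Icc_comp_add_one_of_periodic
        ((hu.toFunction.sub_const 1).mul (hu.toFunction.sub_const 1))).symm
  calc dip M h u u
      ≤ h * ∑ i ∈ Icc 1 (M : ℤ), (2 * (u i * u i) + 2 * (u (i - 1) * u (i - 1))) / h ^ 2 := by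
        refine mul_le_mul_of_nonneg_left (sum_le_sum fun i _ => ?_) hh
        rw [dxm, div_mul_div_comm, ← sq, ← sq]
        gcongr
        nlinarith [sq_nonneg (u i + u (i - 1))]
    _ = 4 / h ^ 2 * ip M h u u := by
        rw [← sum_div, sum_add_distrib, ← mul_sum, ← mul_sum, shift, ip]
        ring

theorem snorm_le_two_div_mul_nrm (hu : Periodic M u) (hh : 0 ≤ h) :
    snorm M h u ≤ 2 / h * nrm M h u := by
  calc snorm M h u ≤ √((2 / h) ^ 2 * ip M h u u) :=
        Real.sqrt_le_sqrt ((dip_self_le hu hh).trans_eq (by ring))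
    _ = 2 / h * nrm M h u := by
        rw [Real.sqrt_mul (sq_nonneg _), Real.sqrt_sq (by positivity), nrm]

end GridFunctions

theorem nrm_le_of_perturbed_reduction {M : ℕ} {h : ℝ} {e f R : ℤ → ℝ} (hh : 0 < h)
    (he : Periodic M e) (hf : Periodic M f)
    (hrel : ∀ i : ℤ, f i = dxx h e i - h ^ 2 / 12 * dxx h f i + R i) :
    nrm M h f ≤ 3 / h * snorm M h e + 3 / 2 * nrm M h R := by
  set A := nrm M h f
  set B := snorm M h e
  set C := nrm M h R
  have paired : ip M h f f = ip M h (dxx h e) f - h ^ 2 / 12 * ip M h (dxx h f) f + ip M h R f := by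
    simp only [ip, mul_sum, ← sum_sub_distrib, ← sum_add_distrib]
    refine sum_congr rfl fun i _ => ?_
    nth_rewrite 1 [hrel i]
    ring
  have energy : A ^ 2 = -dip M h e f + h ^ 2 / 12 * dip M h f f + ip M h R f := by
    rw [nrm_sq hh.le, paired, ip_dxx_eq_neg_dip he hf hh.ne', ip_dxx_eq_neg_dip hf hf hh.ne']
    ring
  have cross : -dip M h e f ≤ B * (2 / h * A) :=
    (neg_le_abs _).trans <| (abs_dip_le_snorm_mul_snorm hh.le).trans <|
      mul_le_mul_of_nonneg_left (snorm_le_two_div_mul_nrm hf hh.le) (Real.sqrt_nonneg _)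
  have inverse : h ^ 2 / 12 * dip M h f f ≤ A ^ 2 / 3 := by
    calc h ^ 2 / 12 * dip M h f f ≤ h ^ 2 / 12 * (4 / h ^ 2 * ip M h f f) := by
          gcongr; exact dip_self_le hf hh.le
      _ = A ^ 2 / 3 := by rw [nrm_sq hh.le]; field_simp; ring
  have forcing : ip M h R f ≤ C * A := (le_abs_self _).trans (abs_ip_le_nrm_mul_nrm hh.le)
  have hA : 0 ≤ A := Real.sqrt_nonneg _
  have hX : 0 ≤ 3 / h * B + 3 / 2 * C := by
    have : 0 ≤ B := Real.sqrt_nonneg _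
    have : 0 ≤ C := Real.sqrt_nonneg _
    positivity
  have key : A ^ 2 ≤ (3 / h * B + 3 / 2 * C) * A := by
    linear_combination (3 / 2 : ℝ) * (cross + inverse + forcing) + (3 / 2 : ℝ) * energy
  nlinarith

theorem perturbed_reduction_bound_general (M : ℕ) (h : ℝ) (e f R : ℤ → ℝ)
    (hh : 0 < h)
    (he : Periodic M e) (hf : Periodic M f)
    (hrel : ∀ i : ℤ, f i = dxx h e i - h ^ 2 / 12 * dxx h f i + R i) :
    (nrm M h f) ^ 2 ≤ 18 / h ^ 2 * (snorm M h e) ^ 2 + 9 / 2 * (nrm M h R) ^ 2 ∧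
      ((∀ i : ℤ, R i = 0) → (nrm M h f) ^ 2 ≤ 9 / h ^ 2 * (snorm M h e) ^ 2) := by
  have bound := nrm_le_of_perturbed_reduction hh he hf hrel
  have hf0 : 0 ≤ nrm M h f := Real.sqrt_nonneg _
  refine ⟨?_, fun hR => ?_⟩
  · calc nrm M h f ^ 2 ≤ (3 / h * snorm M h e + 3 / 2 * nrm M h R) ^ 2 := by gcongr
      _ ≤ 18 / h ^ 2 * snorm M h e ^ 2 + 9 / 2 * nrm M h R ^ 2 := by
        linear_combination sq_nonneg (3 / h * snorm M h e - 3 / 2 * nrm M h R)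
  · have hR0 : nrm M h R = 0 := by simp [nrm, ip, hR]
    calc nrm M h f ^ 2 ≤ (3 / h * snorm M h e) ^ 2 := by gcongr; simpa [hR0] using bound
      _ = 9 / h ^ 2 * snorm M h e ^ 2 := by ring

/-- Estimate (fk) in the proof of Theorem 6.1, and estimate (xi) of the stability theorem. -/
theorem perturbed_reduction_bound (M : ℕ) (h : ℝ) (e f R : ℤ → ℝ)
    (hM : 0 < M) (hh : 0 < h)
    (he : Periodic M e) (hf : Periodic M f) (hR : Periodic M R)
    (hrel : ∀ i : ℤ, f i = dxx h e i - h ^ 2 / 12 * dxx h f i + R i) :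
    (nrm M h f) ^ 2 ≤ 18 / h ^ 2 * (snorm M h e) ^ 2 + 9 / 2 * (nrm M h R) ^ 2 ∧
      ((∀ i : ℤ, R i = 0) → (nrm M h f) ^ 2 ≤ 9 / h ^ 2 * (snorm M h e) ^ 2) :=
  perturbed_reduction_bound_general M h e f R hh he hf hrel

end BBMB
end
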